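/- arXiv:math/0405292 — 2 statements merged into one kernel-verified Lean document; each statement's English description precedes it below -/
import Mathlib

section
/- For every fixed integer p ≥ 2, the quantity E_{n,p} satisfies, as n → ∞, E_{n,p} = 2p·log n + 2p·γ − 2p·H_p + 3 − 2p − 2p/(p−1) + O(log n / n); that is, there exist C > 0 and N such that for all n ≥ N, |E_{n,p} − (2p·log n + 2p·γ − 2p·H_p + 3 − 2p − 2p/(p−1))| ≤ C·(log n)/n. -/
/-- The `r`-th harmonic number `H_r = Σ_{k=1}^r 1/k`. -/
noncomputable def harmonicNum (r : ℕ) : ℝ := ∑ k ∈ Finset.Icc 1 r, (1 : ℝ) / k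

open Filter Asymptotics


lemma harmonicNum_eq (n : ℕ) : harmonicNum n = ((harmonic n : ℚ) : ℝ) := by
  induction n with
  | zero => simp [harmonicNum]
  | succ n ih =>
    rw [harmonicNum, Finset.sum_Icc_succ_top (by omega : 1 ≤ n + 1), ← harmonicNum, ih,
      harmonic_succ]
    push_cast
    ring

lemma harmonicNum_nonneg (n : ℕ) : 0 ≤ harmonicNum n :=
  Finset.sum_nonneg fun k _ => by positivity

lemma harmonicNum_gamma_bound {n : ℕ} (hn : 1 ≤ n) :
    |harmonicNum n - Real.log n - Real.eulerMascheroniConstant| ≤ ((n : ℝ))⁻¹ := by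
  have h1 := Real.eulerMascheroniSeq_lt_eulerMascheroniConstant n
  have h2 := Real.eulerMascheroniConstant_lt_eulerMascheroniSeq' n
  rw [Real.eulerMascheroniSeq] at h1
  rw [Real.eulerMascheroniSeq', if_neg (by omega)] at h2
  rw [← harmonicNum_eq] at h1 h2
  have hx : (0:ℝ) < (n:ℝ) := by positivity
  have hlog : Real.log ((n:ℝ) + 1) - Real.log n ≤ ((n:ℝ))⁻¹ := by
    rw [← Real.log_div (by positivity) hx.ne']
    have hrw : ((n:ℝ) + 1) / n = 1 + (n:ℝ)⁻¹ := by field_simp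
    rw [hrw]
    have hexp := Real.add_one_le_exp ((n:ℝ)⁻¹)
    calc Real.log (1 + (n:ℝ)⁻¹) ≤ Real.log (Real.exp ((n:ℝ)⁻¹)) := by
          apply Real.log_le_log (by positivity); linarith
      _ = (n:ℝ)⁻¹ := Real.log_exp _
  rw [abs_le]
  constructor
  · have : (0:ℝ) ≤ (n:ℝ)⁻¹ := by positivity
    linarith
  · linarith

lemma choose_ratio_aux (n p : ℕ) (hpn : p ≤ n) :
    ∀ d k, k + d ≤ p → n.choose k * (n + 1 - p) ^ d ≤ n.choose (k + d) * p ^ d := by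
  intro d
  induction d with
  | zero => simp
  | succ d ih =>
    intro k hk
    have h2 : n + 1 - p ≤ n - k := by omega
    calc n.choose k * (n + 1 - p) ^ (d + 1)
        = (n.choose k * (n + 1 - p)) * (n + 1 - p) ^ d := by ring
      _ ≤ (n.choose k * (n - k)) * (n + 1 - p) ^ d :=
          Nat.mul_le_mul_right _ (Nat.mul_le_mul_left _ h2)
      _ = (n.choose (k + 1) * (k + 1)) * (n + 1 - p) ^ d := by rw [← Nat.choose_succ_right_eq]
      _ ≤ (n.choose (k + 1) * p) * (n + 1 - p) ^ d :=
          Nat.mul_le_mul_right _ (Nat.mul_le_mul_left _ (by omega))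
      _ = (n.choose (k + 1) * (n + 1 - p) ^ d) * p := by ring
      _ ≤ (n.choose (k + 1 + d) * p ^ d) * p := Nat.mul_le_mul_right _ (ih (k + 1) (by omega))
      _ = n.choose (k + (d + 1)) * p ^ (d + 1) := by rw [show k+1+d = k+(d+1) by omega]; ring

/-- For `2p+2 ≤ n` and `k ≤ p`: `C(n,k) · n^(p-k) ≤ C(n,p) · (2p)^p` (over ℝ). -/
lemma choose_mul_le {n p k : ℕ} (hk : k ≤ p) (hp : 1 ≤ p) (hn : 2 * p + 2 ≤ n) :
    (n.choose k : ℝ) * (n : ℝ) ^ (p - k) ≤ (n.choose p : ℝ) * (2 * (p : ℝ)) ^ p := by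
  have hbase := choose_ratio_aux n p (by omega) (p - k) k (by omega)
  rw [show k + (p - k) = p by omega] at hbase
  have hcast : (n.choose k : ℝ) * ((n : ℝ) + 1 - p) ^ (p - k)
      ≤ (n.choose p : ℝ) * (p : ℝ) ^ (p - k) := by
    have := (Nat.cast_le (α := ℝ)).2 hbase
    push_cast [Nat.cast_sub (show p ≤ n + 1 by omega)] at this
    convert this using 3
  have hhalf : (n : ℝ) ≤ 2 * ((n : ℝ) + 1 - p) := by
    have h2p : (2 * p : ℝ) ≤ n := by exact_mod_cast le_trans (by omega) hn
    linarith
  have hnn : (0:ℝ) ≤ (n:ℝ) := by positivity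
  calc (n.choose k : ℝ) * (n : ℝ) ^ (p - k)
      ≤ (n.choose k : ℝ) * (2 * ((n : ℝ) + 1 - p)) ^ (p - k) := by
        apply mul_le_mul_of_nonneg_left _ (by positivity)
        exact pow_le_pow_left₀ hnn hhalf _
    _ = (n.choose k : ℝ) * ((n : ℝ) + 1 - p) ^ (p - k) * 2 ^ (p - k) := by
        rw [mul_pow]; ring
    _ ≤ (n.choose p : ℝ) * (p : ℝ) ^ (p - k) * 2 ^ (p - k) := by
        apply mul_le_mul_of_nonneg_right hcast (by positivity)
    _ = (n.choose p : ℝ) * (2 * (p : ℝ)) ^ (p - k) := by rw [mul_pow]; ring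
    _ ≤ (n.choose p : ℝ) * (2 * (p : ℝ)) ^ p := by
        apply mul_le_mul_of_nonneg_left _ (by positivity)
        have h1 : (1:ℝ) ≤ (p:ℝ) := by exact_mod_cast hp
        apply pow_le_pow_right₀ (by linarith) (by omega)

/-- Quotient bound helper. -/
lemma quot_bound {a b K x : ℝ} (hb : 0 < b) (hx : 0 < x) (h : |a| * x ≤ K * b) :
    |a / b| ≤ K * |x⁻¹| := by
  rw [abs_div, abs_of_pos hb, abs_inv, abs_of_pos hx, ← div_eq_mul_inv, div_le_div_iff₀ hb hx]
  exact h

lemma log_ge_one_eventually : ∀ᶠ n : ℕ in atTop, 1 ≤ Real.log n := by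
  filter_upwards [eventually_ge_atTop 3] with n hn
  have h3 : (3:ℝ) ≤ (n:ℝ) := by exact_mod_cast hn
  have he : Real.exp 1 ≤ (n:ℝ) := le_trans (le_trans Real.exp_one_lt_d9.le (by norm_num)) h3
  calc (1:ℝ) = Real.log (Real.exp 1) := (Real.log_exp 1).symm
    _ ≤ Real.log n := Real.log_le_log (Real.exp_pos 1) he

lemma inv_isBigO_logdiv :
    (fun n : ℕ => ((n:ℝ))⁻¹) =O[atTop] (fun n : ℕ => Real.log n * ((n:ℝ))⁻¹) := by
  rw [isBigO_iff]
  refine ⟨1, ?_⟩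
  filter_upwards [log_ge_one_eventually, eventually_ge_atTop 1] with n hlog hn
  have hx : (0:ℝ) < (n:ℝ) := by exact_mod_cast Nat.lt_of_lt_of_le Nat.zero_lt_one hn
  have hinv : (0:ℝ) ≤ ((n:ℝ))⁻¹ := by positivity
  rw [Real.norm_eq_abs, Real.norm_eq_abs, abs_of_nonneg hinv,
    abs_of_nonneg (by nlinarith : (0:ℝ) ≤ Real.log n * ((n:ℝ))⁻¹), one_mul]
  nlinarith

lemma const_isBigO_log (c : ℝ) : (fun _ : ℕ => c) =O[atTop] (fun n : ℕ => Real.log n) := by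
  rw [isBigO_iff]
  refine ⟨|c|, ?_⟩
  filter_upwards [log_ge_one_eventually] with n hlog
  rw [Real.norm_eq_abs, Real.norm_eq_abs, abs_of_nonneg (by linarith : (0:ℝ) ≤ Real.log n)]
  nlinarith [abs_nonneg c]

lemma harmonic_isBigO_log : (fun n : ℕ => harmonicNum n) =O[atTop] (fun n : ℕ => Real.log n) := by
  rw [isBigO_iff]
  refine ⟨2 + |Real.eulerMascheroniConstant|, ?_⟩
  filter_upwards [log_ge_one_eventually, eventually_ge_atTop 1] with n hlog hn
  have hx : (1:ℝ) ≤ (n:ℝ) := by exact_mod_cast hn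
  have hb := harmonicNum_gamma_bound hn
  rw [abs_le] at hb
  have hinv : ((n:ℝ))⁻¹ ≤ 1 := by
    rw [inv_le_one_iff₀]; right; exact hx
  have hγ : Real.eulerMascheroniConstant ≤ |Real.eulerMascheroniConstant| := le_abs_self _
  rw [Real.norm_eq_abs, Real.norm_eq_abs, abs_of_nonneg (harmonicNum_nonneg n),
    abs_of_nonneg (by linarith : (0:ℝ) ≤ Real.log n)]
  nlinarith [abs_nonneg Real.eulerMascheroniConstant]

lemma harmonic_gamma_isBigO :
    (fun n : ℕ => harmonicNum n - Real.log n - Real.eulerMascheroniConstant)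
      =O[atTop] (fun n : ℕ => ((n:ℝ))⁻¹) := by
  rw [isBigO_iff]
  refine ⟨1, ?_⟩
  filter_upwards [eventually_ge_atTop 1] with n hn
  rw [Real.norm_eq_abs, Real.norm_eq_abs, one_mul, abs_of_nonneg (by positivity : (0:ℝ) ≤ ((n:ℝ))⁻¹)]
  exact harmonicNum_gamma_bound hn

/-- The exact expectation `E_{n,p}` of the size of the spanning tree of `p` randomly
chosen nodes in a random binary search tree of size `n` (Lemma 1). -/
noncomputable def Enp (n p : ℕ) : ℝ :=
    2 * p * ((n : ℝ) + 1) ^ 2 / (((n : ℝ) + 2 - p) * ((n : ℝ) + 1 - p))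
      * (harmonicNum n - harmonicNum p)
    + 2 * (2 * (p : ℝ) - 1) * ((n : ℝ) + 1) / (((n : ℝ) + 2 - p) * ((n : ℝ) + 1 - p))
    + 3 + 2 * p
    - 2 * p * (n : ℝ) / ((n : ℝ) + 1 - p)
    + (2 * p * ((n : ℝ) + 1) * (-1 : ℝ) ^ p / (n.choose p : ℝ)) * harmonicNum n
    + (2 * p * ((n : ℝ) + 1) * (-1 : ℝ) ^ p / (n.choose p : ℝ))
        * ∑ k ∈ Finset.Icc 1 (p - 1), ((-1 : ℝ) ^ k / k) * (n.choose k : ℝ)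


section Pieces
variable {p : ℕ} (hp : 2 ≤ p)

lemma hbasic_fact (hp : 2 ≤ p) : ∀ n : ℕ, 2 * p + 2 ≤ n →
    (0:ℝ) < (n:ℝ) ∧ 2 * (p:ℝ) + 2 ≤ (n:ℝ) ∧ (n:ℝ)/2 ≤ (n:ℝ) + 1 - (p:ℝ)
      ∧ (n:ℝ)/2 ≤ (n:ℝ) + 2 - (p:ℝ) ∧ (n:ℝ)/2 ≤ (n:ℝ) - (p:ℝ) + 1
      ∧ (0:ℝ) < (n.choose p : ℝ) ∧ (1:ℝ) ≤ (n:ℝ) := by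
  intro n hn
  have h1 : (2 * (p:ℝ) + 2 : ℝ) ≤ (n:ℝ) := by exact_mod_cast hn
  have hx : (0:ℝ) < (n:ℝ) := by linarith
  have hc : (0:ℝ) < (n.choose p : ℝ) := by
    exact_mod_cast Nat.choose_pos (show p ≤ n by omega)
  exact ⟨hx, h1, by linarith, by linarith, by linarith, hc, by linarith⟩

lemma piece_A (hp : 2 ≤ p) : (fun n : ℕ => ((n:ℝ)+1)^2 / (((n:ℝ)+2-(p:ℝ))*((n:ℝ)+1-(p:ℝ))) - 1)
    =O[atTop] (fun n : ℕ => ((n:ℝ))⁻¹) := by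
  have hq : (2:ℝ) ≤ (p:ℝ) := by exact_mod_cast hp
  rw [isBigO_iff]
  refine ⟨20 * (p:ℝ), ?_⟩
  filter_upwards [eventually_ge_atTop (2*p+2)] with n hn
  obtain ⟨hx, h2q, hd2, hd1, hd3, hC, hx1⟩ := hbasic_fact hp n hn
  have hd1' : (0:ℝ) < (n:ℝ)+2-(p:ℝ) := by linarith
  have hd2' : (0:ℝ) < (n:ℝ)+1-(p:ℝ) := by linarith
  have heq : ((n:ℝ)+1)^2 / (((n:ℝ)+2-(p:ℝ))*((n:ℝ)+1-(p:ℝ))) - 1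
      = ((2*(p:ℝ)-1)*(n:ℝ) + (3*(p:ℝ) - (p:ℝ)^2 - 1))
        / (((n:ℝ)+2-(p:ℝ))*((n:ℝ)+1-(p:ℝ))) := by
    field_simp
    ring
  rw [Real.norm_eq_abs, Real.norm_eq_abs, heq]
  apply quot_bound (by positivity) hx
  have habs : |(2*(p:ℝ)-1)*(n:ℝ) + (3*(p:ℝ) - (p:ℝ)^2 - 1)| ≤ 5*(p:ℝ)*(n:ℝ) := by
    rw [abs_le]
    constructor <;> nlinarith
  have hD : ((n:ℝ)/2)*((n:ℝ)/2) ≤ ((n:ℝ)+2-(p:ℝ))*((n:ℝ)+1-(p:ℝ)) :=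
    mul_le_mul hd1 hd2 (by linarith) (by linarith)
  have h1 : |(2*(p:ℝ)-1)*(n:ℝ) + (3*(p:ℝ) - (p:ℝ)^2 - 1)| * (n:ℝ) ≤ 5*(p:ℝ)*(n:ℝ)*(n:ℝ) :=
    mul_le_mul_of_nonneg_right habs hx.le
  have h2 : 20*(p:ℝ)*(((n:ℝ)/2)*((n:ℝ)/2)) ≤ 20*(p:ℝ)*(((n:ℝ)+2-(p:ℝ))*((n:ℝ)+1-(p:ℝ))) :=
    mul_le_mul_of_nonneg_left hD (by linarith)
  nlinarith [h1, h2]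

lemma piece_T2 (hp : 2 ≤ p) :
    (fun n : ℕ => 2*(2*(p:ℝ)-1)*((n:ℝ)+1) / (((n:ℝ)+2-(p:ℝ))*((n:ℝ)+1-(p:ℝ))))
    =O[atTop] (fun n : ℕ => ((n:ℝ))⁻¹) := by
  have hq : (2:ℝ) ≤ (p:ℝ) := by exact_mod_cast hp
  rw [isBigO_iff]
  refine ⟨32*(p:ℝ), ?_⟩
  filter_upwards [eventually_ge_atTop (2*p+2)] with n hn
  obtain ⟨hx, h2q, hd2, hd1, hd3, hC, hx1⟩ := hbasic_fact hp n hn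
  rw [Real.norm_eq_abs, Real.norm_eq_abs]
  apply quot_bound (by nlinarith) hx
  have habs : |2*(2*(p:ℝ)-1)*((n:ℝ)+1)| ≤ 8*(p:ℝ)*(n:ℝ) := by
    rw [abs_le]; constructor <;> nlinarith
  have hD : ((n:ℝ)/2)*((n:ℝ)/2) ≤ ((n:ℝ)+2-(p:ℝ))*((n:ℝ)+1-(p:ℝ)) :=
    mul_le_mul hd1 hd2 (by linarith) (by linarith)
  have h1 : |2*(2*(p:ℝ)-1)*((n:ℝ)+1)| * (n:ℝ) ≤ 8*(p:ℝ)*(n:ℝ)*(n:ℝ) :=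
    mul_le_mul_of_nonneg_right habs hx.le
  have h2 : 32*(p:ℝ)*(((n:ℝ)/2)*((n:ℝ)/2)) ≤ 32*(p:ℝ)*(((n:ℝ)+2-(p:ℝ))*((n:ℝ)+1-(p:ℝ))) :=
    mul_le_mul_of_nonneg_left hD (by linarith)
  nlinarith [h1, h2]

lemma piece_T3 (hp : 2 ≤ p) :
    (fun n : ℕ => 2*(p:ℝ) - 2*(p:ℝ)*(n:ℝ)/((n:ℝ)+1-(p:ℝ)))
    =O[atTop] (fun n : ℕ => ((n:ℝ))⁻¹) := by
  have hq : (2:ℝ) ≤ (p:ℝ) := by exact_mod_cast hp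
  rw [isBigO_iff]
  refine ⟨4*(p:ℝ)^2, ?_⟩
  filter_upwards [eventually_ge_atTop (2*p+2)] with n hn
  obtain ⟨hx, h2q, hd2, hd1, hd3, hC, hx1⟩ := hbasic_fact hp n hn
  have hd2' : (0:ℝ) < (n:ℝ)+1-(p:ℝ) := by linarith
  have heq : 2*(p:ℝ) - 2*(p:ℝ)*(n:ℝ)/((n:ℝ)+1-(p:ℝ))
      = (2*(p:ℝ)*(1-(p:ℝ)))/((n:ℝ)+1-(p:ℝ)) := by
    field_simp
    ring
  rw [Real.norm_eq_abs, Real.norm_eq_abs, heq]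
  apply quot_bound hd2' hx
  have habs : |2*(p:ℝ)*(1-(p:ℝ))| ≤ 2*(p:ℝ)^2 := by
    rw [abs_le]; constructor <;> nlinarith
  have h1 : |2*(p:ℝ)*(1-(p:ℝ))| * (n:ℝ) ≤ 2*(p:ℝ)^2*(n:ℝ) :=
    mul_le_mul_of_nonneg_right habs hx.le
  have h2 : 4*(p:ℝ)^2*((n:ℝ)/2) ≤ 4*(p:ℝ)^2*((n:ℝ)+1-(p:ℝ)) :=
    mul_le_mul_of_nonneg_left hd2 (by positivity)
  nlinarith [h1, h2]

lemma piece_T4 (hp : 2 ≤ p) :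
    (fun n : ℕ => (2*(p:ℝ)*((n:ℝ)+1)*(-1:ℝ)^p/(n.choose p : ℝ)) * harmonicNum n)
    =O[atTop] (fun n : ℕ => Real.log n * ((n:ℝ))⁻¹) := by
  have hq : (2:ℝ) ≤ (p:ℝ) := by exact_mod_cast hp
  have hbench : (fun n : ℕ => harmonicNum n * ((n:ℝ))⁻¹)
      =O[atTop] (fun n : ℕ => Real.log n * ((n:ℝ))⁻¹) :=
    harmonic_isBigO_log.mul (isBigO_refl _ _)
  refine IsBigO.trans ?_ hbench
  rw [isBigO_iff]
  refine ⟨4*(p:ℝ)*(2*(p:ℝ))^p, ?_⟩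
  filter_upwards [eventually_ge_atTop (2*p+2)] with n hn
  obtain ⟨hx, h2q, hd2, hd1, hd3, hC, hx1⟩ := hbasic_fact hp n hn
  have hcm := choose_mul_le (Nat.zero_le p) (by omega) hn
  rw [Nat.choose_zero_right, Nat.cast_one, one_mul, Nat.sub_zero] at hcm
  have hxp : (n:ℝ)^2 ≤ (n:ℝ)^p := pow_le_pow_right₀ hx1 hp
  have hrw : (2*(p:ℝ)*((n:ℝ)+1)*(-1:ℝ)^p/(n.choose p : ℝ)) * harmonicNum n
      = (2*(p:ℝ)*((n:ℝ)+1)*(-1:ℝ)^p * harmonicNum n)/(n.choose p : ℝ) := by ring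
  rw [Real.norm_eq_abs, Real.norm_eq_abs, hrw, abs_mul,
    abs_of_nonneg (harmonicNum_nonneg n), ← mul_assoc]
  apply quot_bound hC hx
  have habsc : |2*(p:ℝ)*((n:ℝ)+1)*(-1:ℝ)^p| = 2*(p:ℝ)*((n:ℝ)+1) := by
    rw [abs_mul, abs_pow, abs_neg, abs_one, one_pow, mul_one,
      abs_of_pos (by nlinarith : (0:ℝ) < 2*(p:ℝ)*((n:ℝ)+1))]
  rw [abs_mul, habsc, abs_of_nonneg (harmonicNum_nonneg n)]
  have h4q : (0:ℝ) ≤ 4*(p:ℝ) := by nlinarith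
  have hA1 : 4*(p:ℝ)*(n:ℝ)^2 ≤ 4*(p:ℝ)*(n:ℝ)^p := mul_le_mul_of_nonneg_left hxp h4q
  have hA2 : 4*(p:ℝ)*(n:ℝ)^p ≤ 4*(p:ℝ)*((n.choose p:ℝ)*(2*(p:ℝ))^p) :=
    mul_le_mul_of_nonneg_left hcm h4q
  have hkey : 2*(p:ℝ)*((n:ℝ)+1) * (n:ℝ) ≤ (4*(p:ℝ)*(2*(p:ℝ))^p) * (n.choose p:ℝ) := by
    nlinarith
  calc 2*(p:ℝ)*((n:ℝ)+1) * harmonicNum n * (n:ℝ)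
      = (2*(p:ℝ)*((n:ℝ)+1) * (n:ℝ)) * harmonicNum n := by ring
    _ ≤ ((4*(p:ℝ)*(2*(p:ℝ))^p) * (n.choose p:ℝ)) * harmonicNum n :=
        mul_le_mul_of_nonneg_right hkey (harmonicNum_nonneg n)
    _ = 4*(p:ℝ)*(2*(p:ℝ))^p * harmonicNum n * (n.choose p:ℝ) := by ring

end Pieces

lemma piece_S1 {p : ℕ} (hp : 2 ≤ p) :
    (fun n : ℕ => (2*(p:ℝ)*((n:ℝ)+1)*(-1:ℝ)^p/(n.choose p : ℝ))
      * ∑ k ∈ Finset.Icc 1 (p-2), ((-1:ℝ)^k / k) * (n.choose k : ℝ))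
    =O[atTop] (fun n : ℕ => ((n:ℝ))⁻¹) := by
  have hq : (2:ℝ) ≤ (p:ℝ) := by exact_mod_cast hp
  rw [isBigO_iff]
  refine ⟨4*(p:ℝ)^2*(2*(p:ℝ))^p, ?_⟩
  filter_upwards [eventually_ge_atTop (2*p+2)] with n hn
  obtain ⟨hx, h2q, hd2, hd1, hd3, hC, hx1⟩ := hbasic_fact hp n hn
  set S := ∑ k ∈ Finset.Icc 1 (p-2), ((-1:ℝ)^k / k) * (n.choose k : ℝ) with hSdef
  have hSabs : |S| * (n:ℝ)^2 ≤ (p:ℝ) * ((n.choose p:ℝ) * (2*(p:ℝ))^p) := by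
    have h1 : |S| ≤ ∑ k ∈ Finset.Icc 1 (p-2), (n.choose k:ℝ) := by
      refine le_trans (Finset.abs_sum_le_sum_abs _ _) (Finset.sum_le_sum fun k hk => ?_)
      obtain ⟨hk1, hk2⟩ := Finset.mem_Icc.1 hk
      have hk1' : (1:ℝ) ≤ (k:ℝ) := by exact_mod_cast hk1
      rw [abs_mul, abs_div, abs_pow, abs_neg, abs_one, one_pow, Nat.abs_cast, Nat.abs_cast]
      have hdk : (1:ℝ)/(k:ℝ) ≤ 1 := by
        rw [div_le_one (by linarith)]; linarith
      nlinarith [Nat.cast_nonneg (α := ℝ) (n.choose k), hdk]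
    have h2 : (∑ k ∈ Finset.Icc 1 (p-2), (n.choose k:ℝ)) * (n:ℝ)^2
        ≤ ∑ _k ∈ Finset.Icc 1 (p-2), (n.choose p:ℝ)*(2*(p:ℝ))^p := by
      rw [Finset.sum_mul]
      refine Finset.sum_le_sum fun k hk => ?_
      obtain ⟨hk1, hk2⟩ := Finset.mem_Icc.1 hk
      have hx2 : (n:ℝ)^2 ≤ (n:ℝ)^(p-k) := pow_le_pow_right₀ hx1 (by omega)
      calc (n.choose k:ℝ) * (n:ℝ)^2 ≤ (n.choose k:ℝ) * (n:ℝ)^(p-k) :=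
            mul_le_mul_of_nonneg_left hx2 (Nat.cast_nonneg _)
        _ ≤ (n.choose p:ℝ)*(2*(p:ℝ))^p := choose_mul_le (by omega) (by omega) hn
    have h3 : ∑ _k ∈ Finset.Icc 1 (p-2), (n.choose p:ℝ)*(2*(p:ℝ))^p
        ≤ (p:ℝ) * ((n.choose p:ℝ)*(2*(p:ℝ))^p) := by
      rw [Finset.sum_const, Nat.card_Icc]
      simp only [nsmul_eq_mul]
      have hcard : ((p - 2 + 1 - 1 : ℕ):ℝ) ≤ (p:ℝ) := by exact_mod_cast (by omega : p-2+1-1 ≤ p)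
      apply mul_le_mul_of_nonneg_right hcard (by positivity)
    calc |S| * (n:ℝ)^2 ≤ (∑ k ∈ Finset.Icc 1 (p-2), (n.choose k:ℝ)) * (n:ℝ)^2 :=
          mul_le_mul_of_nonneg_right h1 (by positivity)
      _ ≤ ∑ _k ∈ Finset.Icc 1 (p-2), (n.choose p:ℝ)*(2*(p:ℝ))^p := h2
      _ ≤ (p:ℝ) * ((n.choose p:ℝ)*(2*(p:ℝ))^p) := h3
  have hrw : (2*(p:ℝ)*((n:ℝ)+1)*(-1:ℝ)^p/(n.choose p : ℝ)) * S
      = (2*(p:ℝ)*((n:ℝ)+1)*(-1:ℝ)^p * S)/(n.choose p : ℝ) := by ring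
  rw [Real.norm_eq_abs, Real.norm_eq_abs, hrw]
  apply quot_bound hC hx
  have habsc : |2*(p:ℝ)*((n:ℝ)+1)*(-1:ℝ)^p| = 2*(p:ℝ)*((n:ℝ)+1) := by
    rw [abs_mul, abs_pow, abs_neg, abs_one, one_pow, mul_one,
      abs_of_pos (by nlinarith : (0:ℝ) < 2*(p:ℝ)*((n:ℝ)+1))]
  rw [abs_mul, habsc]
  -- goal : 2p(x+1) * |S| * x ≤ (4p²(2p)^p) * C
  have hstep1 : 2*(p:ℝ)*((n:ℝ)+1) * |S| * (n:ℝ) ≤ 4*(p:ℝ) * (|S| * (n:ℝ)^2) := by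
    have hpos : (0:ℝ) ≤ 2*(p:ℝ) * |S| * ((n:ℝ)*((n:ℝ)-1)) :=
      mul_nonneg (by positivity) (mul_nonneg hx.le (by linarith))
    nlinarith [hpos]
  have hstep2 : 4*(p:ℝ) * (|S| * (n:ℝ)^2) ≤ 4*(p:ℝ) * ((p:ℝ) * ((n.choose p:ℝ) * (2*(p:ℝ))^p)) :=
    mul_le_mul_of_nonneg_left hSabs (by linarith)
  calc 2*(p:ℝ)*((n:ℝ)+1) * |S| * (n:ℝ) ≤ 4*(p:ℝ) * ((p:ℝ) * ((n.choose p:ℝ) * (2*(p:ℝ))^p)) :=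
        le_trans hstep1 hstep2
    _ = 4*(p:ℝ)^2*(2*(p:ℝ))^p * (n.choose p:ℝ) := by ring

lemma piece_S2 {p : ℕ} (hp : 2 ≤ p) :
    (fun n : ℕ => (2*(p:ℝ)*((n:ℝ)+1)*(-1:ℝ)^p/(n.choose p : ℝ))
        * (((-1:ℝ)^(p-1) / ((p-1 : ℕ):ℝ)) * (n.choose (p-1) : ℝ))
      + 2*(p:ℝ) + 2*(p:ℝ)/((p:ℝ)-1))
    =O[atTop] (fun n : ℕ => ((n:ℝ))⁻¹) := by
  have hq : (2:ℝ) ≤ (p:ℝ) := by exact_mod_cast hp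
  rw [isBigO_iff]
  refine ⟨4*(p:ℝ)^3, ?_⟩
  filter_upwards [eventually_ge_atTop (2*p+2)] with n hn
  obtain ⟨hx, h2q, hd2, hd1, hd3, hC, hx1⟩ := hbasic_fact hp n hn
  have hd3' : (0:ℝ) < (n:ℝ) - (p:ℝ) + 1 := by linarith
  have hq1 : (0:ℝ) < (p:ℝ) - 1 := by linarith
  have hcast : ((p-1 : ℕ):ℝ) = (p:ℝ) - 1 := by
    push_cast [Nat.cast_sub (by omega : 1 ≤ p)]
    ring
  have hcc : (n.choose p : ℝ) * (p:ℝ) = (n.choose (p-1) : ℝ) * ((n:ℝ) - (p:ℝ) + 1) := by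
    have h0 : n.choose ((p-1)+1) * ((p-1)+1) = n.choose (p-1) * (n - (p-1)) :=
      Nat.choose_succ_right_eq n (p-1)
    rw [show (p-1)+1 = p by omega] at h0
    have hcast2 := congrArg (Nat.cast : ℕ → ℝ) h0
    push_cast [Nat.cast_sub (by omega : p - 1 ≤ n), Nat.cast_sub (by omega : 1 ≤ p)] at hcast2
    linarith
  have hch : (n.choose (p-1) : ℝ) = (n.choose p : ℝ) * (p:ℝ) / ((n:ℝ) - (p:ℝ) + 1) := by
    field_simp
    linarith
  have heq : (2*(p:ℝ)*((n:ℝ)+1)*(-1:ℝ)^p/(n.choose p : ℝ))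
        * (((-1:ℝ)^(p-1) / ((p-1 : ℕ):ℝ)) * (n.choose (p-1) : ℝ))
      + 2*(p:ℝ) + 2*(p:ℝ)/((p:ℝ)-1)
      = -(2*(p:ℝ)^3) / (((p:ℝ)-1)*((n:ℝ)-(p:ℝ)+1)) := by
    rw [hch, hcast]
    rcases Nat.even_or_odd p with hpe | hpo
    · rw [hpe.neg_one_pow, (Nat.Even.sub_odd (by omega) hpe odd_one).neg_one_pow]
      field_simp
      ring
    · rw [hpo.neg_one_pow, (Nat.Odd.sub_odd hpo odd_one).neg_one_pow]
      field_simp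
      ring
  rw [Real.norm_eq_abs, Real.norm_eq_abs, heq]
  apply quot_bound (by positivity) hx
  have habs : |-(2*(p:ℝ)^3)| = 2*(p:ℝ)^3 := by
    rw [abs_neg, abs_of_pos (by positivity)]
  rw [habs]
  have h5 : ((n:ℝ)-(p:ℝ)+1) ≤ ((p:ℝ)-1)*((n:ℝ)-(p:ℝ)+1) := by nlinarith
  have h6 : 4*(p:ℝ)^3*((n:ℝ)/2) ≤ 4*(p:ℝ)^3*((n:ℝ)-(p:ℝ)+1) :=
    mul_le_mul_of_nonneg_left hd3 (by positivity)
  have h7 : 4*(p:ℝ)^3*((n:ℝ)-(p:ℝ)+1) ≤ 4*(p:ℝ)^3*(((p:ℝ)-1)*((n:ℝ)-(p:ℝ)+1)) :=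
    mul_le_mul_of_nonneg_left h5 (by positivity)
  linarith

lemma sum_split {p : ℕ} (hp : 2 ≤ p) (n : ℕ) :
    (∑ k ∈ Finset.Icc 1 (p-1), ((-1:ℝ)^k / k) * (n.choose k : ℝ))
      = (∑ k ∈ Finset.Icc 1 (p-2), ((-1:ℝ)^k / k) * (n.choose k : ℝ))
        + ((-1:ℝ)^(p-1) / ((p-1 : ℕ):ℝ)) * (n.choose (p-1) : ℝ) := by
  rw [show p - 1 = (p-2)+1 by omega, Finset.sum_Icc_succ_top (by omega : 1 ≤ p-2+1)]

/-- For every fixed `p ≥ 2`, as `n → ∞`,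
`E_{n,p} = 2p·log n + 2pγ − 2pH_p + 3 − 2p − 2p/(p−1) + O(log n / n)`. -/
theorem Enp_asymptotic (p : ℕ) (hp : 2 ≤ p) :
    ∃ C > (0 : ℝ), ∃ N : ℕ, ∀ n : ℕ, N ≤ n →
      |Enp n p - (2 * p * Real.log n + 2 * p * Real.eulerMascheroniConstant
          - 2 * p * harmonicNum p + 3 - 2 * p - 2 * p / ((p : ℝ) - 1))|
        ≤ C * Real.log n / n := by
  have hT1 : (fun n : ℕ =>
      2 * (p:ℝ) * ((n:ℝ)+1)^2 / (((n:ℝ)+2-(p:ℝ))*((n:ℝ)+1-(p:ℝ)))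
          * (harmonicNum n - harmonicNum p)
        - 2*(p:ℝ)*Real.log n - 2*(p:ℝ)*Real.eulerMascheroniConstant + 2*(p:ℝ)*harmonicNum p)
      =O[atTop] (fun n : ℕ => Real.log n * ((n:ℝ))⁻¹) := by
    have hHfac : (fun n : ℕ => 2*(p:ℝ)*(harmonicNum n - harmonicNum p))
        =O[atTop] (fun n : ℕ => Real.log n) :=
      (harmonic_isBigO_log.sub (const_isBigO_log (harmonicNum p))).const_mul_left (2*(p:ℝ))
    have h1 := hHfac.mul (piece_A hp)
    have h2 := (harmonic_gamma_isBigO.const_mul_left (2*(p:ℝ))).trans inv_isBigO_logdiv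
    refine (h1.add h2).congr' (Filter.Eventually.of_forall fun n => ?_) EventuallyEq.rfl
    ring
  have hg := inv_isBigO_logdiv
  have key : (fun n : ℕ => Enp n p - (2 * (p:ℝ) * Real.log n
        + 2 * (p:ℝ) * Real.eulerMascheroniConstant - 2 * (p:ℝ) * harmonicNum p + 3
        - 2 * (p:ℝ) - 2 * (p:ℝ) / ((p : ℝ) - 1)))
      =O[atTop] (fun n : ℕ => Real.log n * ((n:ℝ))⁻¹) := by
    have hsumO := (((hT1.add ((piece_T2 hp).trans hg)).add ((piece_T3 hp).trans hg)).add
        (piece_T4 hp)).add (((piece_S1 hp).trans hg).add ((piece_S2 hp).trans hg))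
    refine hsumO.congr' (Filter.Eventually.of_forall fun n => ?_) EventuallyEq.rfl
    simp only [Enp]
    rw [sum_split hp n]
    ring
  obtain ⟨c, hc0, hc⟩ := key.exists_pos
  have hb := hc.bound
  have h2 : ∀ᶠ n : ℕ in atTop,
      |Enp n p - (2 * (p:ℝ) * Real.log n + 2 * (p:ℝ) * Real.eulerMascheroniConstant
        - 2 * (p:ℝ) * harmonicNum p + 3 - 2 * (p:ℝ) - 2 * (p:ℝ) / ((p : ℝ) - 1))|
      ≤ c * Real.log n / n := by
    filter_upwards [hb, eventually_ge_atTop 1] with n hbn hn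
    have hx : (0:ℝ) < (n:ℝ) := by exact_mod_cast Nat.lt_of_lt_of_le Nat.zero_lt_one hn
    have hlog : (0:ℝ) ≤ Real.log n := Real.log_nonneg (by exact_mod_cast hn)
    rw [Real.norm_eq_abs, Real.norm_eq_abs] at hbn
    calc |Enp n p - (2 * (p:ℝ) * Real.log n + 2 * (p:ℝ) * Real.eulerMascheroniConstant
          - 2 * (p:ℝ) * harmonicNum p + 3 - 2 * (p:ℝ) - 2 * (p:ℝ) / ((p : ℝ) - 1))|
        ≤ c * |Real.log n * ((n:ℝ))⁻¹| := hbn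
      _ = c * Real.log n / n := by
          rw [abs_of_nonneg (by positivity : (0:ℝ) ≤ Real.log n * ((n:ℝ))⁻¹)]
          ring
  obtain ⟨N, hN⟩ := eventually_atTop.1 h2
  exact ⟨c, hc0, N, fun n hn => hN n hn⟩
end

section
/- For all integers n ≥ 0 and m ≥ 0, the coefficient of z^n in the formal power series (Σ_{j≥0} binom(j+m, j)·z^j)·(Σ_{k≥1} z^k/k) equals binom(n+m, n)·(H_{n+m} − H_m). Equivalently, [z^n] (1−z)^{−(m+1)}·log(1/(1−z)) = binom(n+m, n)·(H_{n+m} − H_m). -/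
/-- The formal power series `(1−z)^{−(m+1)} = Σ_{j≥0} binom(j+m,j)·z^j`. -/
noncomputable def invOneSubPow' (m : ℕ) : PowerSeries ℝ :=
  PowerSeries.mk fun j => ((j + m).choose j : ℝ)

/-- The formal power series `log(1/(1−z)) = Σ_{k≥1} z^k/k`. -/
noncomputable def logInvOneSub : PowerSeries ℝ :=
  PowerSeries.mk fun k => if k = 0 then 0 else (1 : ℝ) / k

noncomputable def A (m n : ℕ) : ℝ :=
  ∑ k ∈ Finset.Icc 1 n, ((n - k + m).choose m : ℝ) / k

noncomputable def B (m n : ℕ) : ℝ :=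
  ((n + m).choose n : ℝ) * (harmonicNum (n + m) - harmonicNum m)

lemma harmonicNum_succ (r : ℕ) : harmonicNum (r + 1) = harmonicNum r + 1 / (r + 1) := by
  rw [harmonicNum, harmonicNum, Finset.sum_Icc_succ_top (by omega)]
  push_cast; ring

lemma A_zero_left (n : ℕ) : A 0 n = harmonicNum n := by
  unfold A harmonicNum
  exact Finset.sum_congr rfl fun k hk => by simp

lemma B_zero_left (n : ℕ) : B 0 n = harmonicNum n := by
  simp [B, harmonicNum]

lemma A_rec (m n : ℕ) : A (m+1) (n+1) = A (m+1) n + A m (n+1) := by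
  unfold A
  have h1 : ∀ k ∈ Finset.Icc 1 (n+1),
      ((n + 1 - k + (m+1)).choose (m+1) : ℝ) / k
        = ((n + 1 - k + m).choose (m+1) : ℝ) / k + ((n + 1 - k + m).choose m : ℝ) / k := by
    intro k hk
    have : n + 1 - k + (m+1) = (n + 1 - k + m) + 1 := by omega
    rw [this, Nat.choose_succ_succ']
    push_cast; ring
  rw [Finset.sum_congr rfl h1, Finset.sum_add_distrib]
  congr 1
  rw [Finset.sum_Icc_succ_top (by omega : 1 ≤ n + 1)]
  simp only [Nat.sub_self, Nat.zero_add, Nat.choose_succ_self, Nat.cast_zero, zero_div, add_zero]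
  refine Finset.sum_congr rfl fun k hk => ?_
  simp only [Finset.mem_Icc] at hk
  congr 3
  omega

lemma key_nat (m n : ℕ) :
    (n + m + 2) * (n + m + 1).choose (n + 1) = (m + 1) * (n + m + 2).choose (n + 1) := by
  have h1 : (n + m + 1).choose (n + 1) = (n + m + 1).choose m := by
    rw [← Nat.choose_symm (by omega : n + 1 ≤ n + m + 1)]
    congr 1; omega
  have h2 : (n + m + 2).choose (n + 1) = (n + m + 2).choose (m + 1) := by
    rw [← Nat.choose_symm (by omega : n + 1 ≤ n + m + 2)]
    congr 1; omega
  rw [h1, h2]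
  have h := Nat.add_one_mul_choose_eq (n + m + 1) m
  have e : n + m + 1 + 1 = n + m + 2 := by omega
  rw [e] at h
  linarith

lemma B_rec (m n : ℕ) : B (m+1) (n+1) = B (m+1) n + B m (n+1) := by
  unfold B
  have hp : (n + 1 + (m + 1)).choose (n + 1)
      = (n + m + 1).choose n + (n + m + 1).choose (n + 1) := by
    have : n + 1 + (m + 1) = (n + m + 1) + 1 := by omega
    rw [this, Nat.choose_succ_succ']
  have e2 : n + (m + 1) = n + m + 1 := by omega
  have e3 : n + 1 + m = n + m + 1 := by omega
  rw [hp, e2, e3]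
  have e1 : n + 1 + (m + 1) = (n + m + 1) + 1 := by omega
  rw [e1, harmonicNum_succ (n + m + 1), harmonicNum_succ m,
    show n + m + 1 = (n + m) + 1 from rfl, harmonicNum_succ (n + m)]
  have hp2 : (((n + m) + 1 + 1).choose (n+1) : ℝ)
      = ((n + m + 1).choose n : ℝ) + ((n + m + 1).choose (n+1) : ℝ) := by
    rw [Nat.choose_succ_succ']; push_cast; ring
  have hkey : ((n:ℝ) + m + 2) * ((n + m + 1).choose (n+1) : ℝ)
      = ((m:ℝ) + 1) * (((n + m + 1).choose n : ℝ) + ((n + m + 1).choose (n+1) : ℝ)) := by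
    have h := key_nat m n
    have h' : (((n + m + 2) * (n + m + 1).choose (n + 1) : ℕ) : ℝ)
        = (((m + 1) * (n + m + 2).choose (n + 1) : ℕ) : ℝ) := by exact_mod_cast h
    push_cast at h'
    rw [hp2] at h'
    linarith
  have h3 : (((n + m + 1).choose n : ℝ) + ((n + m + 1).choose (n+1) : ℝ)) / ((n:ℝ) + m + 2)
      = ((n + m + 1).choose (n+1) : ℝ) / ((m:ℝ) + 1) := by
    rw [div_eq_div_iff (by positivity) (by positivity)]
    linarith [hkey]
  push_cast
  linear_combination h3

lemma A_eq_B (m n : ℕ) : A m n = B m n := by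
  induction m generalizing n with
  | zero => rw [A_zero_left, B_zero_left]
  | succ m ih =>
    induction n with
    | zero => simp [A, B]
    | succ n ihn => rw [A_rec, B_rec, ihn, ih]

/-- For all `n, m ≥ 0`,
`[z^n] (1−z)^{−(m+1)}·log(1/(1−z)) = binom(n+m,n)·(H_{n+m} − H_m)`. -/
theorem coeff_invOneSubPow_mul_log (n m : ℕ) :
    PowerSeries.coeff (R := ℝ) n (invOneSubPow' m * logInvOneSub)
      = ((n + m).choose n : ℝ) * (harmonicNum (n + m) - harmonicNum m) := by
  have hA : PowerSeries.coeff (R := ℝ) n (invOneSubPow' m * logInvOneSub) = A m n := by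
    rw [PowerSeries.coeff_mul]
    simp only [invOneSubPow', logInvOneSub, PowerSeries.coeff_mk]
    rw [Finset.Nat.sum_antidiagonal_eq_sum_range_succ_mk, Finset.sum_range_succ]
    rw [Nat.sub_self, if_pos rfl, mul_zero, add_zero]
    have step : ∀ k ∈ Finset.range n,
        ((k + m).choose k : ℝ) * (if n - k = 0 then 0 else (1:ℝ) / ((n - k : ℕ) : ℝ))
          = ((k + m).choose m : ℝ) / ((n - k : ℕ) : ℝ) := by
      intro k hk
      simp only [Finset.mem_range] at hk
      rw [if_neg (by omega)]
      have hs : (k + m).choose k = (k + m).choose m := by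
        rw [← Nat.choose_symm (Nat.le_add_right k m)]
        congr 1; omega
      rw [hs, mul_one_div]
    rw [Finset.sum_congr rfl step, ← Finset.sum_range_reflect]
    unfold A
    rw [show Finset.Icc 1 n = Finset.Ico 1 (n+1) by rw [Finset.Ico_add_one_right_eq_Icc],
      Finset.sum_Ico_eq_sum_range]
    rw [show n + 1 - 1 = n from rfl]
    refine Finset.sum_congr rfl fun i hi => ?_
    simp only [Finset.mem_range] at hi
    rw [show n - 1 - i = n - (1 + i) by omega, show n - (n - (1 + i)) = 1 + i by omega]
  rw [hA, A_eq_B]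
  rfl
end
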